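/- For n ≥ 1 let T(n) denote the number of rooted binary trees with n vertices whose position map is injective. Then T(n) ≤ catalan(n) for all n ≥ 1; moreover T(n) = catalan(n) for 1 ≤ n ≤ 4, and T(n) < catalan(n) for all n ≥ 5. -/

import Mathlib

/-- A rooted binary tree: every vertex has an optional left child and an optional
right child. -/
inductive BTree : Type where
  | node : Option BTree → Option BTree → BTree

namespace BTree

/-- Number of vertices of an optional rooted binary tree. -/
def osize : Option BTree → ℕ
  | none => 0
  | some (node l r) => 1 + osize l + osize r

/-- Number of vertices of a rooted binary tree. -/
def size (t : BTree) : ℕ := osize (some t)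

/-- The multiset of positions of the vertices of an optional rooted binary tree whose
root is placed at `p`: the left (resp. right) child of a vertex at `(a,b)` is at
`(a+1,b)` (resp. `(a,b+1)`). -/
def opos : Option BTree → ℕ × ℕ → Multiset (ℕ × ℕ)
  | none, _ => 0
  | some (node l r), p => p ::ₘ (opos l (p.1 + 1, p.2) + opos r (p.1, p.2 + 1))

/-- The multiset of positions of the vertices of a rooted binary tree, the root being
placed at `(0,0)`. -/
def positions (t : BTree) : Multiset (ℕ × ℕ) := opos (some t) (0, 0)

/-- The position map of a rooted binary tree is injective. -/
def PosInjective (t : BTree) : Prop := t.positions.Nodup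

end BTree

/-!
Rooted binary trees with `n` vertices correspond to Mathlib's `BinaryTree Unit` with `n`
nodes, which are counted by `catalan n`; so `T(n) ≤ catalan n`, with equality exactly when
every tree with `n` vertices has injective position map.

Two vertices at the same position have root paths with the same numbers of left and right
steps, so after the paths branch each of them still makes a left and a right step: a
collision forces at least `1 + 2 + 2 = 5` vertices. Conversely, the tree with vertices at
`(0,0), (1,0), (1,1), (0,1), (1,1)`, hung below a left path of `n - 5` vertices, has `n`
vertices and a collision for every `n ≥ 5`.
-/

namespace BTree

def toBinaryTree : Option BTree → BinaryTree Unit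
  | none => .nil
  | some (node l r) => .node () (toBinaryTree l) (toBinaryTree r)

def ofBinaryTree : BinaryTree Unit → Option BTree
  | .nil => none
  | .node _ l r => some (node (ofBinaryTree l) (ofBinaryTree r))

def equivBinaryTree : Option BTree ≃ BinaryTree Unit where
  toFun := toBinaryTree
  invFun := ofBinaryTree
  left_inv o := by
    induction o using toBinaryTree.induct <;> simp_all [toBinaryTree, ofBinaryTree]
  right_inv x := by
    induction x <;> simp_all [toBinaryTree, ofBinaryTree]

theorem numNodes_toBinaryTree (o : Option BTree) : (toBinaryTree o).numNodes = osize o := by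
  induction o using toBinaryTree.induct <;>
    simp_all [toBinaryTree, osize, BinaryTree.numNodes]; omega

theorem setOf_osize_eq (n : ℕ) :
    {o : Option BTree | osize o = n} = equivBinaryTree ⁻¹' (BinaryTree.treesOfNumNodesEq n) := by
  ext o
  simp [equivBinaryTree, numNodes_toBinaryTree]

theorem finite_setOf_size_eq (n : ℕ) : {t : BTree | t.size = n}.Finite := by
  change (some ⁻¹' {o : Option BTree | osize o = n}).Finite
  rw [setOf_osize_eq]
  exact ((Set.toFinite _).preimage equivBinaryTree.injective.injOn).preimage
    (Option.some_injective _).injOn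

theorem ncard_setOf_size_eq {n : ℕ} (hn : n ≠ 0) :
    {t : BTree | t.size = n}.ncard = catalan n := by
  have hrange : {o : Option BTree | osize o = n} ⊆ Set.range some := by
    rintro (_ | t) ho
    · exact absurd ho.symm (by simpa [osize] using hn)
    · exact ⟨t, rfl⟩
  change (some ⁻¹' {o : Option BTree | osize o = n}).ncard = catalan n
  rw [Set.ncard_preimage_of_injective_subset_range (Option.some_injective _) hrange,
    setOf_osize_eq, Set.ncard_preimage_of_injective_subset_range equivBinaryTree.injective
      (by simp), Set.ncard_coe_finset, BinaryTree.treesOfNumNodesEq_card_eq_catalan]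

theorem bounds_of_mem_opos {o : Option BTree} {p q : ℕ × ℕ} (hq : q ∈ opos o p) :
    p.1 ≤ q.1 ∧ p.2 ≤ q.2 ∧ q.1 + q.2 < p.1 + p.2 + osize o := by
  induction o, p using opos.induct with
  | case1 => simp [opos] at hq
  | case2 l r p ihl ihr =>
    simp only [opos, Multiset.mem_cons, Multiset.mem_add] at hq
    rcases hq with rfl | hq | hq
    · simp [osize]
    · have := ihl hq; simp only [osize]; omega
    · have := ihr hq; simp only [osize]; omega

theorem five_le_osize_of_not_nodup_opos {o : Option BTree} {p : ℕ × ℕ}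
    (h : ¬ (opos o p).Nodup) : 5 ≤ osize o := by
  induction o, p using opos.induct with
  | case1 => simp [opos] at h
  | case2 l r p ihl ihr =>
    by_contra hsmall
    simp only [osize] at hsmall
    rw [opos] at h
    refine h (Multiset.nodup_cons.2 ⟨fun hp => ?_, Multiset.nodup_add.2 ⟨?_, ?_, ?_⟩⟩)
    · rcases Multiset.mem_add.1 hp with hp | hp <;> have := bounds_of_mem_opos hp <;> omega
    · by_contra hl; have := ihl hl; omega
    · by_contra hr; have := ihr hr; omega
    -- A position shared by the two subtrees is off both axes through `p`, so it lies at
    -- depth at least one in each of them, and each subtree has at least two vertices.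
    · refine Multiset.disjoint_left.2 fun hql hqr => ?_
      have := bounds_of_mem_opos hql
      have := bounds_of_mem_opos hqr
      omega

theorem posInjective_of_size_lt_five {t : BTree} (ht : t.size < 5) : t.PosInjective := by
  by_contra h
  exact (five_le_osize_of_not_nodup_opos h).not_gt ht

def stackLeft : ℕ → BTree → BTree
  | 0, t => t
  | k + 1, t => node (some (stackLeft k t)) none

theorem size_stackLeft (k : ℕ) (t : BTree) : (stackLeft k t).size = k + t.size := by
  induction k with
  | zero => simp [stackLeft]
  | succ k ih => simp only [stackLeft, size, osize] at ih ⊢; omega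

theorem nodup_opos_of_nodup_opos_stackLeft {k : ℕ} {t : BTree} {p : ℕ × ℕ}
    (h : (opos (some (stackLeft k t)) p).Nodup) : (opos (some t) (p.1 + k, p.2)).Nodup := by
  induction k generalizing p with
  | zero => simpa [stackLeft] using h
  | succ k ih =>
    simp only [stackLeft, opos, Multiset.nodup_cons, add_zero] at h
    simpa [add_assoc, add_comm 1] using ih h.2

def cross : BTree :=
  node (some (node none (some (node none none)))) (some (node (some (node none none)) none))

theorem size_cross : cross.size = 5 := by
  simp [cross, size, osize]

theorem not_nodup_opos_cross (p : ℕ × ℕ) : ¬ (opos (some cross) p).Nodup := by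
  simp [cross, opos]

theorem exists_size_eq_not_posInjective {n : ℕ} (hn : 5 ≤ n) :
    ∃ t : BTree, t.size = n ∧ ¬ t.PosInjective :=
  ⟨stackLeft (n - 5) cross, by rw [size_stackLeft, size_cross]; omega,
    fun h => not_nodup_opos_cross _ (nodup_opos_of_nodup_opos_stackLeft h)⟩

end BTree

open BTree in
/-- the number `T(n)` of rooted binary trees with `n` vertices and
injective position map satisfies `T(n) ≤ catalan n`, with equality for `1 ≤ n ≤ 4`
and strict inequality for `n ≥ 5`. -/
theorem injective_trees_vs_catalan (n : ℕ) (hn : 1 ≤ n) :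
    Set.ncard {t : BTree | t.size = n ∧ t.PosInjective} ≤ catalan n ∧
    (n ≤ 4 → Set.ncard {t : BTree | t.size = n ∧ t.PosInjective} = catalan n) ∧
    (5 ≤ n → Set.ncard {t : BTree | t.size = n ∧ t.PosInjective} < catalan n) := by
  have hcard := ncard_setOf_size_eq (n := n) (by omega)
  have hfin := finite_setOf_size_eq n
  have hsub : {t : BTree | t.size = n ∧ t.PosInjective} ⊆ {t | t.size = n} := fun _ h => h.1
  refine ⟨hcard ▸ Set.ncard_le_ncard hsub hfin, fun h4 => ?_, fun h5 => ?_⟩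
  · rw [← hcard]
    congr 1
    ext t
    exact and_iff_left_of_imp fun ht => posInjective_of_size_lt_five (by omega)
  · obtain ⟨t, ht, hnt⟩ := exists_size_eq_not_posInjective h5
    rw [← hcard]
    exact Set.ncard_lt_ncard ((Set.ssubset_iff_of_subset hsub).mpr ⟨t, ht, fun h => hnt h.2⟩) hfin
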